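/- arXiv:1108.2878 — 3 statements merged into one kernel-verified Lean document; each statement's English description precedes it below -/
import Mathlib

section
/- Let M be a regular irreducible algebraic monoid in M_n(ℂ) and let a ∈ M. Then L_a^M and R_a^M are locally closed subsets of M_n(ℂ) (in the euclidean topology), i.e., each is the intersection of an open subset and a closed subset of M_n(ℂ). -/
open Matrix

/-- `Mn n` is the multiplicative monoid of `n × n` complex matrices. -/
abbrev Mn (n : ℕ) : Type := Matrix (Fin n) (Fin n) ℂ

/-- A subset of `Mn n` is algebraic if it is the common zero set of a family of
polynomials in the `n²` matrix entries. -/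
def IsAlgebraicMatrixSet {n : ℕ} (X : Set (Mn n)) : Prop :=
  ∃ s : Set (MvPolynomial (Fin n × Fin n) ℂ),
    X = {x | ∀ p ∈ s, MvPolynomial.eval (fun ij => x ij.1 ij.2) p = 0}

/-- `M` is a regular irreducible algebraic monoid in `Mn n`. -/
structure IsRegIrrAlgMonoid {n : ℕ} (M : Set (Mn n)) : Prop where
  one_mem : (1 : Mn n) ∈ M
  mul_mem : ∀ a ∈ M, ∀ b ∈ M, a * b ∈ M
  algebraic : IsAlgebraicMatrixSet M
  regular : ∀ a ∈ M, ∃ x ∈ M, a * x * a = a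
  irreducible : ¬ ∃ A B : Set (Mn n), IsAlgebraicMatrixSet A ∧ IsAlgebraicMatrixSet B ∧
      A ∪ B = M ∧ A ≠ M ∧ B ≠ M

/-- The group of units of the monoid `M` (as a subset of `Mn n`). -/
def unitsOf {n : ℕ} (M : Set (Mn n)) : Set (Mn n) :=
  {u | u ∈ M ∧ ∃ v ∈ M, u * v = 1 ∧ v * u = 1}

def lSet {n : ℕ} (S : Set (Mn n)) (a : Mn n) : Set (Mn n) := {y | ∃ x ∈ S, y = x * a}
def rSet {n : ℕ} (S : Set (Mn n)) (a : Mn n) : Set (Mn n) := {y | ∃ x ∈ S, y = a * x}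
def jSet {n : ℕ} (S : Set (Mn n)) (a : Mn n) : Set (Mn n) :=
  {y | ∃ x ∈ S, ∃ z ∈ S, y = x * a * z}

/-- Green's relation 𝓛 in the monoid `S`: `a 𝓛 b` iff `Sa = Sb`. -/
def GreenL {n : ℕ} (S : Set (Mn n)) (a b : Mn n) : Prop := lSet S a = lSet S b
/-- Green's relation 𝓡 in the monoid `S`: `a 𝓡 b` iff `aS = bS`. -/
def GreenR {n : ℕ} (S : Set (Mn n)) (a b : Mn n) : Prop := rSet S a = rSet S b
/-- Green's relation 𝓓: `a 𝓓 b` iff there is `c ∈ S` with `a 𝓛 c` and `c 𝓡 b`. -/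
def GreenD {n : ℕ} (S : Set (Mn n)) (a b : Mn n) : Prop :=
  ∃ c ∈ S, GreenL S a c ∧ GreenR S c b
/-- Green's relation 𝓙: `a 𝓙 b` iff `SaS = SbS`. -/
def GreenJ {n : ℕ} (S : Set (Mn n)) (a b : Mn n) : Prop := jSet S a = jSet S b

def LClass {n : ℕ} (S : Set (Mn n)) (a : Mn n) : Set (Mn n) := {b ∈ S | GreenL S a b}
def RClass {n : ℕ} (S : Set (Mn n)) (a : Mn n) : Set (Mn n) := {b ∈ S | GreenR S a b}
def DClass {n : ℕ} (S : Set (Mn n)) (a : Mn n) : Set (Mn n) := {b ∈ S | GreenD S a b}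
def JClass {n : ℕ} (S : Set (Mn n)) (a : Mn n) : Set (Mn n) := {b ∈ S | GreenJ S a b}

/-- The set of idempotents in a subset `T`. -/
def idem {n : ℕ} (T : Set (Mn n)) : Set (Mn n) := {x ∈ T | x * x = x}

/-- `rng x` : the row space of `x`, i.e. the image of the linear map `v ↦ v ᵥ* x`
on row vectors (equivalently, the range of `xᵀ *ᵥ ·`). -/
noncomputable def rng {n : ℕ} (x : Mn n) : Submodule ℂ (Fin n → ℂ) :=
  LinearMap.range xᵀ.mulVecLin

/-- `nul x` : the left null space `{v : v ᵥ* x = 0}` of `x`. -/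
noncomputable def nul {n : ℕ} (x : Mn n) : Submodule ℂ (Fin n → ℂ) :=
  LinearMap.ker xᵀ.mulVecLin

/-!
In a regular monoid of matrices, `a 𝓛 b` holds exactly when `a` and `b` have the same row
space: `a = c b` puts the rows of `a` in the row space of `b`, and conversely, if `b z b = b`
and `a = c b` for some matrix `c`, then `a = (a z) b` with `a z ∈ M`. Hence `L_a` consists of
the `b ∈ M` of the form `c a` with `rank a ≤ rank b`. This is the intersection of the closed
set `M`, the linear subspace `{c a}` and the set `{rank ≥ rank a}`, which is open by lower
semicontinuity of the rank. Transposition exchanges `𝓡` and `𝓛`.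
-/

namespace Matrix

variable {K : Type*} [Field K] {l m n : Type*}

lemma range_vecMulLinear_mul_le [Fintype l] [Fintype m] (c : Matrix l m K) (b : Matrix m n K) :
    LinearMap.range (c * b).vecMulLinear ≤ LinearMap.range b.vecMulLinear := by
  rintro _ ⟨w, rfl⟩
  exact ⟨w ᵥ* c, vecMul_vecMul w c b⟩

lemma exists_mul_eq_of_range_vecMulLinear_le [Fintype l] [Fintype m] {a : Matrix m n K}
    {b : Matrix l n K} (h : LinearMap.range b.vecMulLinear ≤ LinearMap.range a.vecMulLinear) :
    ∃ c : Matrix l m K, c * a = b := by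
  classical
  have hrow (i : l) : ∃ w, w ᵥ* a = b i := h ⟨Pi.single i 1, single_one_vecMul i b⟩
  choose c hc using hrow
  exact ⟨Matrix.of c, by ext i j; rw [mul_apply_eq_vecMul, ← hc]; rfl⟩

lemma rank_eq_finrank_range_vecMulLinear [Fintype m] [Fintype n] (a : Matrix m n K) :
    a.rank = Module.finrank K (LinearMap.range a.vecMulLinear) := by
  rw [rank_eq_finrank_span_row, range_vecMulLinear]

lemma isOpen_setOf_le_rank [Fintype m] [Fintype n] {𝕜 : Type*} [NontriviallyNormedField 𝕜]
    [CompleteSpace 𝕜] (r : ℕ) : IsOpen {a : Matrix m n 𝕜 | r ≤ a.rank} := by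
  classical
  let φ : Matrix m n 𝕜 ≃ₗ[𝕜] ((n → 𝕜) →L[𝕜] (m → 𝕜)) :=
    Matrix.toLin'.trans LinearMap.toContinuousLinearMap
  have hφ : Continuous φ := φ.toLinearMap.continuous_of_finiteDimensional
  convert (isOpen_setOfPred_nat_le_rank r).preimage hφ using 1
  ext a
  rw [Set.mem_preimage, Set.mem_ofPred_eq, Set.mem_ofPred_eq, LinearMap.rank,
    ← Module.finrank_eq_rank, Nat.cast_le]
  rfl

end Matrix

structure IsRegularSubmonoid {n : ℕ} (M : Set (Mn n)) : Prop where
  one_mem : (1 : Mn n) ∈ M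
  mul_mem : ∀ a ∈ M, ∀ b ∈ M, a * b ∈ M
  regular : ∀ a ∈ M, ∃ x ∈ M, a * x * a = a

lemma IsAlgebraicMatrixSet.isClosed {n : ℕ} {X : Set (Mn n)} (hX : IsAlgebraicMatrixSet X) :
    IsClosed X := by
  obtain ⟨s, rfl⟩ := hX
  simp only [Set.ofPred_forall]
  exact isClosed_biInter fun p _ =>
    isClosed_eq ((MvPolynomial.continuous_eval p).comp (by fun_prop)) continuous_const

namespace IsRegularSubmonoid

variable {n : ℕ} {M : Set (Mn n)} {a b : Mn n}

lemma mem_lSet_self (hM : IsRegularSubmonoid M) (a : Mn n) : a ∈ lSet M a :=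
  ⟨1, hM.one_mem, (one_mul a).symm⟩

lemma lSet_subset_of_mem (hM : IsRegularSubmonoid M) (h : b ∈ lSet M a) :
    lSet M b ⊆ lSet M a := by
  obtain ⟨c, hc, rfl⟩ := h
  rintro _ ⟨d, hd, rfl⟩
  exact ⟨d * c, hM.mul_mem d hd c hc, (mul_assoc d c a).symm⟩

lemma greenL_iff (hM : IsRegularSubmonoid M) : GreenL M a b ↔ a ∈ lSet M b ∧ b ∈ lSet M a :=
  ⟨fun h => ⟨h ▸ hM.mem_lSet_self a, h.symm ▸ hM.mem_lSet_self b⟩,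
    fun ⟨hab, hba⟩ => (hM.lSet_subset_of_mem hab).antisymm (hM.lSet_subset_of_mem hba)⟩

lemma mem_lSet_of_range_le (hM : IsRegularSubmonoid M) (ha : a ∈ M) (hb : b ∈ M)
    (h : LinearMap.range a.vecMulLinear ≤ LinearMap.range b.vecMulLinear) : a ∈ lSet M b := by
  obtain ⟨z, hz, hbzb⟩ := hM.regular b hb
  obtain ⟨c, rfl⟩ := exists_mul_eq_of_range_vecMulLinear_le h
  refine ⟨c * b * z, hM.mul_mem _ ha z hz, ?_⟩
  rw [mul_assoc (c * b), mul_assoc c, ← mul_assoc b, hbzb]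

lemma greenL_iff_range_eq (hM : IsRegularSubmonoid M) (ha : a ∈ M) (hb : b ∈ M) :
    GreenL M a b ↔ LinearMap.range a.vecMulLinear = LinearMap.range b.vecMulLinear := by
  rw [hM.greenL_iff]
  constructor
  · rintro ⟨⟨c, -, hc⟩, ⟨d, -, hd⟩⟩
    refine le_antisymm ?_ ?_
    · rw [hc]; exact range_vecMulLinear_mul_le c b
    · rw [hd]; exact range_vecMulLinear_mul_le d a
  · intro h
    exact ⟨hM.mem_lSet_of_range_le ha hb h.le, hM.mem_lSet_of_range_le hb ha h.ge⟩

lemma LClass_eq (hM : IsRegularSubmonoid M) (ha : a ∈ M) :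
    LClass M a =
      {b | a.rank ≤ b.rank} ∩ (M ∩ LinearMap.range (LinearMap.mulRight ℂ a)) := by
  ext b
  simp only [LClass, Set.mem_inter_iff, Set.mem_ofPred_eq, SetLike.mem_coe, LinearMap.mem_range,
    LinearMap.mulRight_apply]
  constructor
  · rintro ⟨hb, hab⟩
    have h := (hM.greenL_iff_range_eq ha hb).1 hab
    exact ⟨by rw [rank_eq_finrank_range_vecMulLinear, rank_eq_finrank_range_vecMulLinear, h], hb,
      exists_mul_eq_of_range_vecMulLinear_le h.ge⟩
  · rintro ⟨hrank, hb, c, rfl⟩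
    refine ⟨hb, (hM.greenL_iff_range_eq ha hb).2 ?_⟩
    rw [rank_eq_finrank_range_vecMulLinear, rank_eq_finrank_range_vecMulLinear] at hrank
    exact (Submodule.eq_of_le_of_finrank_le (range_vecMulLinear_mul_le c a) hrank).symm

lemma isLocallyClosed_LClass (hM : IsRegularSubmonoid M) (hc : IsClosed M) (ha : a ∈ M) :
    IsLocallyClosed (LClass M a) := by
  rw [hM.LClass_eq ha]
  exact (isOpen_setOf_le_rank _).isLocallyClosed.inter
    (hc.inter (Submodule.closed_of_finiteDimensional _)).isLocallyClosed

lemma transpose (hM : IsRegularSubmonoid M) : IsRegularSubmonoid {x : Mn n | xᵀ ∈ M} where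
  one_mem := by simpa using hM.one_mem
  mul_mem a ha b hb := by simpa using hM.mul_mem _ hb _ ha
  regular a ha := by
    obtain ⟨x, hx, haxa⟩ := hM.regular _ ha
    exact ⟨xᵀ, by simpa using hx, by
      simpa [transpose_mul, mul_assoc] using congrArg Matrix.transpose haxa⟩

end IsRegularSubmonoid

section Transpose

variable {n : ℕ} (M : Set (Mn n)) (a : Mn n)

lemma lSet_transpose : lSet {x : Mn n | xᵀ ∈ M} aᵀ = (·ᵀ) ⁻¹' rSet M a := by
  ext y
  constructor
  · rintro ⟨x, hx, rfl⟩
    exact ⟨xᵀ, hx, by simp⟩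
  · rintro ⟨x, hx, hy⟩
    refine ⟨xᵀ, by simpa using hx, ?_⟩
    rw [← transpose_transpose y, show yᵀ = a * x from hy, transpose_mul]

lemma RClass_eq_preimage_LClass :
    RClass M a = (·ᵀ) ⁻¹' LClass {x : Mn n | xᵀ ∈ M} aᵀ := by
  have htr : Function.Surjective (transpose : Mn n → Mn n) :=
    (transpose_involutive _ _).surjective
  ext b
  simp only [RClass, LClass, GreenR, GreenL, lSet_transpose, Set.mem_preimage, Set.mem_ofPred_eq,
    transpose_transpose, (Set.preimage_injective.2 htr).eq_iff]

end Transpose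

lemma IsRegularSubmonoid.isLocallyClosed_RClass {n : ℕ} {M : Set (Mn n)} {a : Mn n}
    (hM : IsRegularSubmonoid M) (hc : IsClosed M) (ha : a ∈ M) :
    IsLocallyClosed (RClass M a) := by
  rw [RClass_eq_preimage_LClass]
  exact (hM.transpose.isLocallyClosed_LClass (hc.preimage continuous_id.matrix_transpose)
    (by simpa using ha)).preimage continuous_id.matrix_transpose

/-- For `a ∈ M`, the Green classes `L_a^M` and `R_a^M` are locally closed subsets of
`Mn n` in the euclidean topology: each is the intersection of an open set and a
closed set. -/
theorem stmt_4 {n : ℕ} (M : Set (Mn n)) (hM : IsRegIrrAlgMonoid M)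
    (a : Mn n) (ha : a ∈ M) :
    (∃ U F : Set (Mn n), IsOpen U ∧ IsClosed F ∧ LClass M a = U ∩ F) ∧
    (∃ U F : Set (Mn n), IsOpen U ∧ IsClosed F ∧ RClass M a = U ∩ F) := by
  have hreg : IsRegularSubmonoid M := ⟨hM.one_mem, hM.mul_mem, hM.regular⟩
  have hc : IsClosed M := hM.algebraic.isClosed
  exact ⟨hreg.isLocallyClosed_LClass hc ha, hreg.isLocallyClosed_RClass hc ha⟩
end

section
/- Let M be a regular irreducible algebraic monoid in M_n(ℂ) and let a, b ∈ M. Then: (1) a 𝓛^M b if and only if rng(a) = rng(b); (2) a 𝓡^M b if and only if nul(a) = nul(b); (3) the relations 𝓓^M and 𝓙^M on M coincide. -/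
open Matrix

/-!
If `b = b w b`, then `w b` is an idempotent with the row space of `b`, so every `a` with
`rng a ≤ rng b` satisfies `a = (a w) b`; dually `b w` is an idempotent with the null space of `b`,
and `nul b ≤ nul a` gives `a = b (w a)`. Hence in a regular submonoid `𝓛` and `𝓡` are detected by
row and null spaces. If `a 𝓙 b`, say `b = x a z` and `a = x' b z'`, then `a`, `b` and `x a` all
have the same rank, so `x a` has the row space of `a` and the null space of `b`, i.e.
`a 𝓛 x a 𝓡 b`.
-/

open Module

section LinearAlgebra

variable {n : ℕ}

lemma mem_rng {x : Mn n} {v : Fin n → ℂ} : v ∈ rng x ↔ ∃ u, u ᵥ* x = v := by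
  simp only [rng, LinearMap.mem_range, mulVecLin_apply, mulVec_transpose]

lemma mem_nul {x : Mn n} {v : Fin n → ℂ} : v ∈ nul x ↔ v ᵥ* x = 0 := by
  simp only [nul, LinearMap.mem_ker, mulVecLin_apply, mulVec_transpose]

lemma rng_mul_le (x a : Mn n) : rng (x * a) ≤ rng a := by
  rintro _ ⟨u, rfl⟩
  exact mem_rng.2 ⟨u ᵥ* x, by rw [mulVecLin_apply, mulVec_transpose, vecMul_vecMul]⟩

lemma nul_le_nul_mul (a x : Mn n) : nul a ≤ nul (a * x) := fun v hv => by
  rw [mem_nul, ← vecMul_vecMul, mem_nul.1 hv, zero_vecMul]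

lemma finrank_rng (x : Mn n) : finrank ℂ (rng x) = x.rank :=
  rank_transpose x

lemma finrank_nul_add_rank (x : Mn n) : finrank ℂ (nul x) + x.rank = n := by
  rw [← finrank_rng, add_comm, rng, nul, LinearMap.finrank_range_add_finrank_ker,
    finrank_fin_fun]

lemma rng_eq_of_le_of_rank_eq {a b : Mn n} (h : rng a ≤ rng b) (hr : a.rank = b.rank) :
    rng a = rng b :=
  Submodule.eq_of_le_of_finrank_eq h (by rw [finrank_rng, finrank_rng, hr])

lemma nul_eq_of_le_of_rank_eq {a b : Mn n} (h : nul a ≤ nul b) (hr : a.rank = b.rank) :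
    nul a = nul b := by
  refine Submodule.eq_of_le_of_finrank_eq h ?_
  have ha := finrank_nul_add_rank a
  have hb := finrank_nul_add_rank b
  omega

lemma mul_eq_self_of_rng_le {e a : Mn n} (he : IsIdempotentElem e) (h : rng a ≤ rng e) :
    a * e = a := by
  refine ext_iff_vecMul.2 fun v => ?_
  obtain ⟨u, hu⟩ := mem_rng.1 (h (mem_rng.2 ⟨v, rfl⟩))
  rw [← vecMul_vecMul, ← hu, vecMul_vecMul, he.eq]

lemma mul_eq_of_nul_le {e a : Mn n} (he : IsIdempotentElem e) (h : nul e ≤ nul a) :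
    e * a = a := by
  refine ext_iff_vecMul.2 fun v => ?_
  have hv : v ᵥ* e - v ∈ nul e := by
    rw [mem_nul, sub_vecMul, vecMul_vecMul, he.eq, sub_self]
  rw [← vecMul_vecMul, ← sub_eq_zero, ← sub_vecMul]
  exact mem_nul.1 (h hv)

end LinearAlgebra

section Green

variable {n : ℕ} (S : Submonoid (Mn n)) {a b : Mn n}

lemma mem_lSet_self : a ∈ lSet S a := ⟨1, S.one_mem, (one_mul a).symm⟩

lemma mem_rSet_self : a ∈ rSet S a := ⟨1, S.one_mem, (mul_one a).symm⟩

lemma mem_jSet_self : a ∈ jSet S a := ⟨1, S.one_mem, 1, S.one_mem, by simp⟩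

lemma lSet_subset_lSet_of_mem (h : a ∈ lSet S b) : lSet S a ⊆ lSet S b := by
  obtain ⟨u, hu, rfl⟩ := h
  rintro _ ⟨x, hx, rfl⟩
  exact ⟨x * u, S.mul_mem hx hu, (mul_assoc x u b).symm⟩

lemma greenL_iff_mem_lSet : GreenL S a b ↔ a ∈ lSet S b ∧ b ∈ lSet S a := by
  refine ⟨fun h => ⟨h ▸ mem_lSet_self S, h.symm ▸ mem_lSet_self S⟩, fun ⟨hab, hba⟩ => ?_⟩
  exact (lSet_subset_lSet_of_mem S hab).antisymm (lSet_subset_lSet_of_mem S hba)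

lemma rSet_subset_rSet_of_mem (h : a ∈ rSet S b) : rSet S a ⊆ rSet S b := by
  obtain ⟨u, hu, rfl⟩ := h
  rintro _ ⟨x, hx, rfl⟩
  exact ⟨u * x, S.mul_mem hu hx, mul_assoc b u x⟩

lemma greenR_iff_mem_rSet : GreenR S a b ↔ a ∈ rSet S b ∧ b ∈ rSet S a := by
  refine ⟨fun h => ⟨h ▸ mem_rSet_self S, h.symm ▸ mem_rSet_self S⟩, fun ⟨hab, hba⟩ => ?_⟩
  exact (rSet_subset_rSet_of_mem S hab).antisymm (rSet_subset_rSet_of_mem S hba)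

lemma jSet_subset_jSet_of_mem (h : a ∈ jSet S b) : jSet S a ⊆ jSet S b := by
  obtain ⟨u, hu, v, hv, rfl⟩ := h
  rintro _ ⟨x, hx, z, hz, rfl⟩
  exact ⟨x * u, S.mul_mem hx hu, v * z, S.mul_mem hv hz, by simp only [mul_assoc]⟩

lemma greenJ_iff_mem_jSet : GreenJ S a b ↔ a ∈ jSet S b ∧ b ∈ jSet S a := by
  refine ⟨fun h => ⟨h ▸ mem_jSet_self S, h.symm ▸ mem_jSet_self S⟩, fun ⟨hab, hba⟩ => ?_⟩
  exact (jSet_subset_jSet_of_mem S hab).antisymm (jSet_subset_jSet_of_mem S hba)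

lemma greenJ_of_greenD (h : GreenD S a b) : GreenJ S a b := by
  obtain ⟨c, -, hac, hcb⟩ := h
  obtain ⟨⟨u, hu, rfl⟩, v, hv, hcv⟩ := (greenL_iff_mem_lSet S).1 hac
  obtain ⟨⟨p, hp, hcp⟩, q, hq, rfl⟩ := (greenR_iff_mem_rSet S).1 hcb
  refine (greenJ_iff_mem_jSet S).2 ⟨⟨u, hu, p, hp, ?_⟩, v, hv, q, hq, ?_⟩
  · rw [mul_assoc, ← hcp]
  · rw [← hcv]

lemma rng_le_of_mem_lSet (h : a ∈ lSet S b) : rng a ≤ rng b := by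
  obtain ⟨u, -, rfl⟩ := h
  exact rng_mul_le u b

lemma nul_le_of_mem_rSet (h : a ∈ rSet S b) : nul b ≤ nul a := by
  obtain ⟨u, -, rfl⟩ := h
  exact nul_le_nul_mul b u

lemma mem_lSet_of_rng_le {w : Mn n} (hw : w ∈ S) (hbw : b * w * b = b) (ha : a ∈ S)
    (h : rng a ≤ rng b) : a ∈ lSet S b := by
  have he : IsIdempotentElem (w * b) := by
    rw [IsIdempotentElem, mul_assoc, ← mul_assoc b, hbw]
  have hrng : rng b ≤ rng (w * b) := by
    conv_lhs => rw [← hbw, mul_assoc]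
    exact rng_mul_le b (w * b)
  refine ⟨a * w, S.mul_mem ha hw, ?_⟩
  rw [mul_assoc, mul_eq_self_of_rng_le he (h.trans hrng)]

lemma mem_rSet_of_nul_le {w : Mn n} (hw : w ∈ S) (hbw : b * w * b = b) (ha : a ∈ S)
    (h : nul b ≤ nul a) : a ∈ rSet S b := by
  have he : IsIdempotentElem (b * w) := by
    rw [IsIdempotentElem, ← mul_assoc, hbw]
  have hnul : nul (b * w) ≤ nul b := by
    conv_rhs => rw [← hbw]
    exact nul_le_nul_mul (b * w) b
  refine ⟨w * a, S.mul_mem hw ha, ?_⟩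
  rw [← mul_assoc, mul_eq_of_nul_le he (hnul.trans h)]

variable {S}

lemma greenL_iff_rng_eq (hS : ∀ a ∈ S, ∃ x ∈ S, a * x * a = a)
    (ha : a ∈ S) (hb : b ∈ S) :
    GreenL S a b ↔ rng a = rng b := by
  obtain ⟨x, hx, hax⟩ := hS a ha
  obtain ⟨w, hw, hbw⟩ := hS b hb
  rw [greenL_iff_mem_lSet]
  refine ⟨fun ⟨hab, hba⟩ => (rng_le_of_mem_lSet S hab).antisymm (rng_le_of_mem_lSet S hba),
    fun h => ⟨mem_lSet_of_rng_le S hw hbw ha h.le, mem_lSet_of_rng_le S hx hax hb h.ge⟩⟩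

lemma greenR_iff_nul_eq (hS : ∀ a ∈ S, ∃ x ∈ S, a * x * a = a)
    (ha : a ∈ S) (hb : b ∈ S) :
    GreenR S a b ↔ nul a = nul b := by
  obtain ⟨x, hx, hax⟩ := hS a ha
  obtain ⟨w, hw, hbw⟩ := hS b hb
  rw [greenR_iff_mem_rSet]
  refine ⟨fun ⟨hab, hba⟩ => (nul_le_of_mem_rSet S hba).antisymm (nul_le_of_mem_rSet S hab),
    fun h => ⟨mem_rSet_of_nul_le S hw hbw ha h.ge, mem_rSet_of_nul_le S hx hax hb h.le⟩⟩

lemma greenD_of_greenJ (hS : ∀ a ∈ S, ∃ x ∈ S, a * x * a = a)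
    (ha : a ∈ S) (hb : b ∈ S) (h : GreenJ S a b) : GreenD S a b := by
  obtain ⟨⟨x', -, z', -, ha_eq⟩, x, hx, z, -, hb_eq⟩ := (greenJ_iff_mem_jSet S).1 h
  have hrank_ab : a.rank ≤ b.rank := ha_eq ▸ (rank_mul_le_left _ _).trans (rank_mul_le_right _ _)
  have hrank_bxa : b.rank ≤ (x * a).rank := hb_eq ▸ rank_mul_le_left _ _
  have hrank_xa : (x * a).rank ≤ a.rank := rank_mul_le_right _ _
  have hnul : nul (x * a) ≤ nul b := hb_eq ▸ nul_le_nul_mul (x * a) z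
  have hxa : x * a ∈ S := S.mul_mem hx ha
  refine ⟨x * a, hxa, (greenL_iff_rng_eq hS ha hxa).2 ?_, (greenR_iff_nul_eq hS hxa hb).2 ?_⟩
  · exact (rng_eq_of_le_of_rank_eq (rng_mul_le x a) (by omega)).symm
  · exact nul_eq_of_le_of_rank_eq hnul (by omega)

end Green

/-- For `a, b ∈ M`: `a 𝓛^M b ↔ rng a = rng b`; `a 𝓡^M b ↔ nul a = nul b`; and the
relations `𝓓^M` and `𝓙^M` coincide. -/
theorem stmt_6 {n : ℕ} (M : Set (Mn n)) (hM : IsRegIrrAlgMonoid M)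
    (a b : Mn n) (ha : a ∈ M) (hb : b ∈ M) :
    (GreenL M a b ↔ rng a = rng b) ∧
    (GreenR M a b ↔ nul a = nul b) ∧
    (GreenD M a b ↔ GreenJ M a b) := by
  obtain ⟨S, rfl⟩ : ∃ S : Submonoid (Mn n), (S : Set (Mn n)) = M :=
    ⟨⟨⟨M, fun hx hy => hM.mul_mem _ hx _ hy⟩, hM.one_mem⟩, rfl⟩
  exact ⟨greenL_iff_rng_eq hM.regular ha hb, greenR_iff_nul_eq hM.regular ha hb,
    greenJ_of_greenD S, greenD_of_greenJ hM.regular ha hb⟩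
end

section
/- Let M be a regular irreducible algebraic monoid in M_n(ℂ), let e ∈ M be an idempotent, and let f ∈ M_n(ℂ) be an idempotent with f 𝓡 e in M_n(ℂ). If rng(f) = rng(a) for some a ∈ R_e^M, then f ∈ M and f 𝓡^M e. -/
open Matrix

noncomputable def evAux {n : ℕ} (x : Mn n) : MvPolynomial (Fin n × Fin n) ℂ →+* ℂ :=
  MvPolynomial.eval (fun ij => x ij.1 ij.2)

lemma evAux_subst {n : ℕ} (c x : Mn n) (p : MvPolynomial (Fin n × Fin n) ℂ) :
    evAux x (MvPolynomial.bind₁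
      (fun ij => ∑ l, MvPolynomial.C (c ij.1 l) * MvPolynomial.X (l, ij.2)) p)
    = evAux (c * x) p := by
  induction p using MvPolynomial.induction_on with
  | C r => simp [evAux]
  | add p q hp hq => simp only [map_add, hp, hq]
  | mul_X p ij hp =>
    simp only [_root_.map_mul, MvPolynomial.bind₁_X_right, hp]
    congr 1
    simp [evAux, Matrix.mul_apply]

noncomputable def idealAux {n : ℕ} (a : Mn n) (k : ℕ) : Ideal (MvPolynomial (Fin n × Fin n) ℂ) :=
  ⨅ (j : ℕ) (_ : k < j), RingHom.ker (evAux (a ^ j))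

lemma mem_idealAux {n : ℕ} (a : Mn n) (k : ℕ) (p : MvPolynomial (Fin n × Fin n) ℂ) :
    p ∈ idealAux a k ↔ ∀ j, k < j → evAux (a ^ j) p = 0 := by
  simp [idealAux, Ideal.mem_iInf, RingHom.mem_ker]

/-- Let `e ∈ M` be idempotent and `f ∈ Mn n` an idempotent with `f 𝓡 e` in `Mn n`.
If `rng f = rng a` for some `a ∈ R_e^M`, then `f ∈ M` and `f 𝓡^M e`. -/
theorem stmt_19 {n : ℕ} (M : Set (Mn n)) (hM : IsRegIrrAlgMonoid M)
    (e : Mn n) (he : e ∈ M) (hee : e * e = e)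
    (f : Mn n) (hff : f * f = f) (hfe : GreenR Set.univ f e)
    (a : Mn n) (ha : a ∈ RClass M e) (hra : rng f = rng a) :
    f ∈ M ∧ GreenR M f e := by
  classical
  obtain ⟨haM, hRea⟩ := ha
  -- e * f = f and f * e = e, from f 𝓡 e in Mn
  obtain ⟨u, -, hu⟩ : f ∈ rSet (Set.univ : Set (Mn n)) e := by
    rw [← hfe]; exact ⟨1, Set.mem_univ 1, (mul_one f).symm⟩
  have hef : e * f = f := by rw [hu, ← mul_assoc, hee]
  obtain ⟨v, -, hv⟩ : e ∈ rSet (Set.univ : Set (Mn n)) f := by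
    rw [hfe]; exact ⟨1, Set.mem_univ 1, (mul_one e).symm⟩
  have hfe2 : f * e = e := by rw [hv, ← mul_assoc, hff]
  -- a = e * m₁ with m₁ ∈ M, hence f * a = a
  obtain ⟨m₁, hm₁M, hm₁⟩ : a ∈ rSet M e := by
    rw [hRea]; exact ⟨1, hM.one_mem, (mul_one a).symm⟩
  have hfa : f * a = a := by rw [hm₁, ← mul_assoc, hfe2]
  -- b with b * a = f, from rng f = rng a
  have hwex : ∀ i : Fin n, ∃ w : Fin n → ℂ,
      aᵀ.mulVecLin w = fᵀ.mulVecLin (Pi.single i 1) := by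
    intro i
    have : fᵀ.mulVecLin (Pi.single i 1) ∈ rng a := by
      rw [← hra]; exact ⟨Pi.single i 1, rfl⟩
    obtain ⟨w, hw⟩ := this
    exact ⟨w, hw⟩
  choose w hw using hwex
  set b : Mn n := Matrix.of (fun i j => w i j) with hb
  have hba : b * a = f := by
    ext i k
    have h1 := congrFun (hw i) k
    simp only [Matrix.mulVecLin_apply, Matrix.mulVec, dotProduct,
      Matrix.transpose_apply, Pi.single_apply, mul_ite, mul_one, mul_zero,
      Finset.sum_ite_eq', Finset.mem_univ, if_true] at h1
    rw [Matrix.mul_apply, ← h1]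
    exact Finset.sum_congr rfl fun j _ => by simp [hb, mul_comm]
  -- powers of a are in M
  have hapow : ∀ j : ℕ, a ^ j ∈ M := by
    intro j
    induction j with
    | zero => simpa using hM.one_mem
    | succ k ih => rw [pow_succ]; exact hM.mul_mem _ ih _ haM
  have hfapow : ∀ m : ℕ, f * a ^ (m + 1) = a ^ (m + 1) := by
    intro m
    rw [pow_succ', ← mul_assoc, hfa]
  have hbapow : ∀ m : ℕ, b * a ^ (m + 2) = a ^ (m + 1) := by
    intro m
    rw [pow_succ' a (m + 1), ← mul_assoc, hba, hfapow]
  have hbf : ∀ j : ℕ, b ^ (j + 1) * a ^ (j + 1) = f := by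
    intro j
    induction j with
    | zero => simpa using hba
    | succ k ih =>
      have h2 : b ^ (k + 2) * a ^ (k + 2) = b ^ (k + 1) * (b * a ^ (k + 2)) := by
        rw [pow_succ b (k + 1), mul_assoc]
      rw [h2, hbapow, ih]
  -- the evaluation ring hom and ascending chain of ideals
  set ev : Mn n → MvPolynomial (Fin n × Fin n) ℂ →+* ℂ := fun x => evAux x with hev
  set I : ℕ → Ideal (MvPolynomial (Fin n × Fin n) ℂ) := fun k => idealAux a k with hI
  have memI : ∀ k p, p ∈ I k ↔ ∀ j, k < j → ev (a ^ j) p = 0 := by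
    intro k p
    exact mem_idealAux a k p
  have Imono : Monotone I := by
    intro k k' hkk'
    intro p hp
    rw [memI] at hp ⊢
    intro j hj
    exact hp j (lt_of_le_of_lt hkk' hj)
  obtain ⟨N, hN⟩ := monotone_stabilizes_iff_noetherian.mpr
    (inferInstance : IsNoetherianRing (MvPolynomial (Fin n × Fin n) ℂ)) ⟨I, Imono⟩
  -- substitution lemma
  have hsubst : ∀ (c x : Mn n) (p : MvPolynomial (Fin n × Fin n) ℂ),
      ev x (MvPolynomial.bind₁
        (fun ij => ∑ l, MvPolynomial.C (c ij.1 l) * MvPolynomial.X (l, ij.2)) p)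
      = ev (c * x) p := fun c x p => evAux_subst c x p
  -- one step of the descent
  have step : ∀ (k : ℕ) (x : Mn n), (∀ p ∈ I (k + 1), ev x p = 0) →
      ∀ p ∈ I k, ev (b * x) p = 0 := by
    intro k x hx p hp
    rw [← hsubst b x p]
    apply hx
    rw [memI]
    intro j hj
    rw [hsubst b (a ^ j) p]
    obtain ⟨m, rfl⟩ : ∃ m, j = m + 2 := ⟨j - 2, by omega⟩
    rw [hbapow]
    exact (memI k p).1 hp (m + 1) (by omega)
  -- the key induction
  have main : ∀ m : ℕ, ∀ p ∈ I N, ev (b ^ m * a ^ (N + 1)) p = 0 := by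
    intro m
    induction m with
    | zero =>
      intro p hp
      rw [pow_zero, one_mul]
      exact (memI N p).1 hp (N + 1) (by omega)
    | succ k ih =>
      intro p hp
      have hstab : I (N + 1) = I N := (hN (N + 1) (by omega)).symm
      have := step N (b ^ k * a ^ (N + 1)) (fun q hq => ih q (hstab ▸ hq)) p hp
      rwa [← mul_assoc, ← pow_succ'] at this
  -- conclude f ∈ M
  have hfI : ∀ p ∈ I N, ev f p = 0 := by
    intro p hp
    have := main (N + 1) p hp
    rwa [hbf N] at this
  obtain ⟨s, hs⟩ := hM.algebraic
  have hfM : f ∈ M := by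
    rw [hs]
    intro p hp
    apply hfI
    rw [memI]
    intro j hj
    have : a ^ j ∈ M := hapow j
    rw [hs] at this
    exact this p hp
  refine ⟨hfM, ?_⟩
  -- GreenR M f e
  unfold GreenR
  ext y
  constructor
  · rintro ⟨x, hx, rfl⟩
    exact ⟨f * x, hM.mul_mem f hfM x hx, by rw [← mul_assoc, hef]⟩
  · rintro ⟨x, hx, rfl⟩
    exact ⟨e * x, hM.mul_mem e he x hx, by rw [← mul_assoc, hfe2]⟩
end
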